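/- Let 0 < λ ≤ Λ, let 0 < β < 1, and define φ(x,t) = t^{1−β} + (1 + t^β)|x|² for x ∈ ℝⁿ and t > 0. Let b₀, c₀ : (0,T) → [0,∞) satisfy t·b₀(t)² → 0, t·c₀(t) → 0, and t^{β−1}·c₀(t) → 0 as t → 0⁺, and let b : Ω_T → ℝⁿ, c : Ω_T → ℝ satisfy |b(x,t)| ≤ b₀(t) and |c(x,t)| ≤ c₀(t) with c ≤ 0. Then there exists T₂ ∈ (0,1] such that, with γ₂ = min(β/2, (1−β)/2), for all x ∈ Ω and 0 < t ≤ T₂: −∂φ/∂t(x,t) + M⁺_{λ,Λ}(D²φ(x,t)) + b(x,t)·Dφ(x,t) + c(x,t)φ(x,t) ≤ −γ₂ ( t^{−β} + t^{β−1} |x|² ). -/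

import Mathlib

open Matrix Set Filter

noncomputable def pucciPlus (lam Lam : ℝ) {n : ℕ} (A : Matrix (Fin n) (Fin n) ℝ) : ℝ :=
  if h : A.IsHermitian then
    ∑ i, (Lam * max (h.eigenvalues i) 0 + lam * min (h.eigenvalues i) 0)
  else 0

noncomputable def pucciMinus (lam Lam : ℝ) {n : ℕ} (A : Matrix (Fin n) (Fin n) ℝ) : ℝ :=
  if h : A.IsHermitian then
    ∑ i, (lam * max (h.eigenvalues i) 0 + Lam * min (h.eigenvalues i) 0)
  else 0

noncomputable def grad {n : ℕ} (f : EuclideanSpace ℝ (Fin n) → ℝ)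
    (x : EuclideanSpace ℝ (Fin n)) : EuclideanSpace ℝ (Fin n) :=
  WithLp.toLp 2 fun i => fderiv ℝ f x (EuclideanSpace.single i 1)

noncomputable def hess {n : ℕ} (f : EuclideanSpace ℝ (Fin n) → ℝ)
    (x : EuclideanSpace ℝ (Fin n)) : Matrix (Fin n) (Fin n) ℝ :=
  Matrix.of fun i j =>
    fderiv ℝ (fun y => fderiv ℝ f y (EuclideanSpace.single j 1)) x (EuclideanSpace.single i 1)

/-!
Everything is explicit: `D²φ = 2(1 + t^β) I`, `Dφ = 2(1 + t^β) x` and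
`-∂ₜφ = -(1 - β) t^(-β) - β t^(β-1) |x|²`. For `t ≤ 1` the diffusion term is at most
`4nΛ = 4nΛ t^β · t^(-β)`; by AM-GM the drift term `4 b₀ |x|` is at most
`(β/2) t^(β-1) |x|² + (8/β) t b₀² · t^(-β)`; and since `c ≤ 0`, `cφ ≤ c₀ t^(1-β) = t c₀ · t^(-β)`.
So half of the two negative terms survives as soon as
`4nΛ t^β + (8/β) t b₀² + t c₀ ≤ (1 - β)/2`, which holds for small `t` by the hypotheses on `b₀, c₀`.
-/

open scoped InnerProductSpace Topology

section

variable {n : ℕ}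

theorem Matrix.IsHermitian.eigenvalues_smul_one {a : ℝ}
    (h : (a • (1 : Matrix (Fin n) (Fin n) ℝ)).IsHermitian) (i : Fin n) : h.eigenvalues i = a := by
  have : Nonempty (Fin n) := ⟨i⟩
  have hspec : spectrum ℝ (a • (1 : Matrix (Fin n) (Fin n) ℝ)) = {a} := by
    rw [← Algebra.algebraMap_eq_smul_one, spectrum.scalar_eq]
  simpa [hspec] using h.eigenvalues_mem_spectrum_real i

theorem pucciPlus_smul_one (lam Lam : ℝ) {a : ℝ} (ha : 0 ≤ a) :
    pucciPlus lam Lam (a • (1 : Matrix (Fin n) (Fin n) ℝ)) = n * Lam * a := by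
  have h : (a • (1 : Matrix (Fin n) (Fin n) ℝ)).IsHermitian := by simp [Matrix.IsHermitian]
  rw [pucciPlus, dif_pos h]
  simp only [h.eigenvalues_smul_one, max_eq_left ha, min_eq_right ha, mul_zero, add_zero,
    Finset.sum_const, Finset.card_univ, Fintype.card_fin, nsmul_eq_mul]
  ring

theorem fderiv_const_add_mul_norm_sq_apply (C a : ℝ) (y v : EuclideanSpace ℝ (Fin n)) :
    fderiv ℝ (fun y : EuclideanSpace ℝ (Fin n) => C + a * ‖y‖ ^ 2) y v = 2 * a * ⟪y, v⟫_ℝ := by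
  rw [((((hasStrictFDerivAt_norm_sq y).hasFDerivAt).const_mul a).const_add C).fderiv]
  simp only [_root_.smul_apply, coe_innerSL_apply, nsmul_eq_mul, Nat.cast_ofNat, smul_eq_mul]
  ring

theorem fderiv_const_add_mul_norm_sq_single (C a : ℝ) (y : EuclideanSpace ℝ (Fin n)) (j : Fin n) :
    fderiv ℝ (fun y : EuclideanSpace ℝ (Fin n) => C + a * ‖y‖ ^ 2) y (EuclideanSpace.single j 1)
      = 2 * a * y j := by
  rw [fderiv_const_add_mul_norm_sq_apply, EuclideanSpace.inner_single_right]
  simp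

theorem grad_const_add_mul_norm_sq (C a : ℝ) (x : EuclideanSpace ℝ (Fin n)) :
    grad (fun y : EuclideanSpace ℝ (Fin n) => C + a * ‖y‖ ^ 2) x = (2 * a) • x := by
  ext i
  rw [grad, PiLp.toLp_apply, fderiv_const_add_mul_norm_sq_single]
  simp

theorem hess_const_add_mul_norm_sq (C a : ℝ) (x : EuclideanSpace ℝ (Fin n)) :
    hess (fun y : EuclideanSpace ℝ (Fin n) => C + a * ‖y‖ ^ 2) x
      = (2 * a) • (1 : Matrix (Fin n) (Fin n) ℝ) := by
  refine Matrix.ext fun i j => ?_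
  have hpartial : (fun y => fderiv ℝ (fun y : EuclideanSpace ℝ (Fin n) => C + a * ‖y‖ ^ 2) y
      (EuclideanSpace.single j 1)) = fun y => (2 * a) * EuclideanSpace.proj j y := by
    funext y
    rw [fderiv_const_add_mul_norm_sq_single]
    rfl
  have hproj : HasFDerivAt (fun y : EuclideanSpace ℝ (Fin n) => (2 * a) * EuclideanSpace.proj j y)
      ((2 * a) • (EuclideanSpace.proj j : EuclideanSpace ℝ (Fin n) →L[ℝ] ℝ)) x :=
    ((EuclideanSpace.proj j : EuclideanSpace ℝ (Fin n) →L[ℝ] ℝ).hasFDerivAt (x := x)).const_mul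
      (2 * a)
  rw [hess, Matrix.of_apply, hpartial, hproj.fderiv]
  simp [Matrix.one_apply, eq_comm]

theorem four_mul_le_of_pos {β p : ℝ} (hβ : 0 < β) (hp : 0 < p) (B r : ℝ) :
    4 * B * r ≤ β / 2 * p * r ^ 2 + 8 / β * B ^ 2 / p := by
  have hsq : 0 ≤ (β * p * r - 4 * B) ^ 2 / (2 * β * p) := by positivity
  have hid : β / 2 * p * r ^ 2 + 8 / β * B ^ 2 / p - 4 * B * r
      = (β * p * r - 4 * B) ^ 2 / (2 * β * p) := by
    field_simp
    ring
  linarith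

theorem supersolution_ineq {β γ t nΛ B C r D E : ℝ} (hβ : 0 < β) (ht : 0 < t) (ht1 : t ≤ 1)
    (hnΛ : 0 ≤ nΛ) (hB : 0 ≤ B) (hr : 0 ≤ r) (hγβ : γ ≤ β / 2) (hγ : γ ≤ (1 - β) / 2)
    (hsmall : 4 * nΛ * t ^ β + 8 / β * (t * B ^ 2) + t * C ≤ (1 - β) / 2)
    (hD : D ≤ 2 * (1 + t ^ β) * (B * r)) (hE : E ≤ C * t ^ (1 - β)) :
    -((1 - β) * t ^ (-β) + β * t ^ (β - 1) * r ^ 2) + nΛ * (2 * (1 + t ^ β)) + D + E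
      ≤ -γ * (t ^ (-β) + t ^ (β - 1) * r ^ 2) := by
  set s := t ^ (-β)
  set u := t ^ β
  set p := t ^ (β - 1)
  have hs : 0 < s := Real.rpow_pos_of_pos ht _
  have hp : 0 < p := Real.rpow_pos_of_pos ht _
  have hu1 : u ≤ 1 := Real.rpow_le_one ht.le ht1 hβ.le
  have hus : u * s = 1 := by rw [← Real.rpow_add ht]; simp
  have hts : t ^ (1 - β) = t * s := by
    rw [sub_eq_add_neg, Real.rpow_add ht, Real.rpow_one]
  have hpinv : 1 / p = t * s := by
    rw [one_div, ← Real.rpow_neg ht.le, neg_sub, hts]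
  have hdiffusion : nΛ * (2 * (1 + u)) ≤ 4 * nΛ * u * s := by
    rw [mul_assoc (4 * nΛ), hus]; nlinarith
  have hdrift : D ≤ β / 2 * p * r ^ 2 + 8 / β * (t * B ^ 2) * s := by
    have h4 : 2 * (1 + u) * (B * r) ≤ 4 * B * r := by nlinarith [mul_nonneg hB hr]
    have := four_mul_le_of_pos hβ hp B r
    rw [div_eq_mul_one_div _ p, hpinv] at this
    linarith
  have hsmall_s := mul_le_mul_of_nonneg_right hsmall hs.le
  have hγs := mul_le_mul_of_nonneg_right hγ hs.le
  have hγp := mul_le_mul_of_nonneg_right hγβ (mul_nonneg hp.le (sq_nonneg r))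
  rw [hts] at hE
  linarith

theorem deriv_rpow_add_one_add_rpow_mul {β t : ℝ} (ht : 0 < t) (X : ℝ) :
    deriv (fun s : ℝ => s ^ (1 - β) + (1 + s ^ β) * X) t
      = (1 - β) * t ^ (-β) + β * t ^ (β - 1) * X := by
  have h1 : HasDerivAt (fun s : ℝ => s ^ (1 - β)) ((1 - β) * t ^ (1 - β - 1)) t :=
    Real.hasDerivAt_rpow_const (Or.inl ht.ne')
  have h2 : HasDerivAt (fun s : ℝ => s ^ β) (β * t ^ (β - 1)) t :=
    Real.hasDerivAt_rpow_const (Or.inl ht.ne')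
  have h := h1.add ((h2.const_add 1).mul_const X)
  rw [sub_sub_cancel_left] at h
  exact h.deriv

theorem sum_mul_smul_le {b x : EuclideanSpace ℝ (Fin n)} {B k : ℝ} (hk : 0 ≤ k) (hb : ‖b‖ ≤ B) :
    ∑ i, b i * (k • x) i ≤ k * (B * ‖x‖) := by
  have hinner : ∑ i, b i * (k • x) i = ⟪b, k • x⟫_ℝ := by
    simp [PiLp.inner_apply, mul_comm]
  calc ∑ i, b i * (k • x) i ≤ ‖b‖ * ‖k • x‖ := hinner ▸ real_inner_le_norm _ _
    _ ≤ k * (B * ‖x‖) := by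
      rw [norm_smul, Real.norm_of_nonneg hk]
      nlinarith [mul_le_mul_of_nonneg_right hb (mul_nonneg hk (norm_nonneg x))]

theorem mul_add_le_of_abs_le_of_nonpos {c c₀ A R : ℝ} (hc : |c| ≤ c₀) (hc0 : c ≤ 0)
    (hA : 0 ≤ A) (hR : 0 ≤ R) : c * (A + R) ≤ c₀ * A := by
  nlinarith [le_of_abs_le hc]

theorem eventually_lower_order_le {β K ε : ℝ} {b₀ c₀ : ℝ → ℝ} (hβ : 0 < β) (hε : 0 < ε)
    (hb₀ : Tendsto (fun t => t * b₀ t ^ 2) (𝓝[>] 0) (𝓝 0))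
    (hc₀ : Tendsto (fun t => t * c₀ t) (𝓝[>] 0) (𝓝 0)) :
    ∀ᶠ t in 𝓝[>] 0, 4 * K * t ^ β + 8 / β * (t * b₀ t ^ 2) + t * c₀ t ≤ ε := by
  have hpow : Tendsto (fun t : ℝ => t ^ β) (𝓝[>] 0) (𝓝 0) :=
    ((Real.continuous_rpow_const hβ.le).tendsto' 0 0 (Real.zero_rpow hβ.ne')).mono_left
      nhdsWithin_le_nhds
  have hlim := ((hpow.const_mul (4 * K)).add (hb₀.const_mul (8 / β))).add hc₀
  simp only [mul_zero, add_zero] at hlim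
  exact hlim.eventually (ge_mem_nhds hε)

end

theorem phi_supersolution_general {n : ℕ} (lam Lam : ℝ) (hlam : 0 < lam) (hLam : lam ≤ Lam)
    (β : ℝ) (hβ : 0 < β) (hβ1 : β < 1)
    (Ω : Set (EuclideanSpace ℝ (Fin n))) (T : ℝ) (hT : 0 < T)
    (b₀ c₀ : ℝ → ℝ)
    (hb₀ : Filter.Tendsto (fun t => t * b₀ t ^ 2) (nhdsWithin 0 (Ioi 0)) (nhds 0))
    (hc₀ : Filter.Tendsto (fun t => t * c₀ t) (nhdsWithin 0 (Ioi 0)) (nhds 0))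
    (b : EuclideanSpace ℝ (Fin n) → ℝ → EuclideanSpace ℝ (Fin n))
    (c : EuclideanSpace ℝ (Fin n) → ℝ → ℝ)
    (hb : ∀ x ∈ Ω, ∀ t ∈ Ioo 0 T, ‖b x t‖ ≤ b₀ t)
    (hc : ∀ x ∈ Ω, ∀ t ∈ Ioo 0 T, |c x t| ≤ c₀ t)
    (hcneg : ∀ x ∈ Ω, ∀ t ∈ Ioo 0 T, c x t ≤ 0)
    (φ : EuclideanSpace ℝ (Fin n) → ℝ → ℝ)
    (hφ : ∀ x t, φ x t = t ^ (1 - β) + (1 + t ^ β) * ‖x‖ ^ 2) :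
    ∃ T₂ : ℝ, 0 < T₂ ∧ T₂ ≤ 1 ∧ T₂ ≤ T ∧
      ∀ x ∈ Ω, ∀ t : ℝ, 0 < t → t ≤ T₂ →
        -(deriv (fun s => φ x s) t) + pucciPlus lam Lam (hess (fun y => φ y t) x)
            + (∑ i, b x t i * grad (fun y => φ y t) x i) + c x t * φ x t
          ≤ -(min (β / 2) ((1 - β) / 2)) * (t ^ (-β) + t ^ (β - 1) * ‖x‖ ^ 2) := by
  have hnΛ : 0 ≤ (n : ℝ) * Lam := mul_nonneg n.cast_nonneg (hlam.le.trans hLam)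
  have hsmall : ∀ᶠ t in 𝓝[>] 0, t ≤ 1 ∧ t < T ∧
      4 * (n * Lam) * t ^ β + 8 / β * (t * b₀ t ^ 2) + t * c₀ t ≤ (1 - β) / 2 :=
    ((eventually_le_nhds one_pos).filter_mono nhdsWithin_le_nhds).and
      (((eventually_lt_nhds hT).filter_mono nhdsWithin_le_nhds).and
        (eventually_lower_order_le hβ (by linarith) hb₀ hc₀))
  obtain ⟨T₂, hT₂, hsub⟩ := mem_nhdsGT_iff_exists_Ioc_subset.mp hsmall
  obtain ⟨hT₂1, hT₂T, -⟩ := hsub ⟨hT₂, le_rfl⟩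
  refine ⟨T₂, hT₂, hT₂1, hT₂T.le, fun x hx t ht htT₂ => ?_⟩
  obtain ⟨ht1, htT, hsmall_t⟩ := hsub ⟨ht, htT₂⟩
  have htIoo : t ∈ Ioo 0 T := ⟨ht, htT⟩
  simp only [hφ]
  rw [deriv_rpow_add_one_add_rpow_mul ht, hess_const_add_mul_norm_sq,
    pucciPlus_smul_one _ _ (by positivity), grad_const_add_mul_norm_sq]
  have hbt := hb x hx t htIoo
  exact supersolution_ineq hβ ht ht1 hnΛ ((norm_nonneg _).trans hbt) (norm_nonneg x)
    (min_le_left _ _) (min_le_right _ _) hsmall_t (sum_mul_smul_le (by positivity) hbt)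
    (mul_add_le_of_abs_le_of_nonpos (hc x hx t htIoo) (hcneg x hx t htIoo) (by positivity)
      (by positivity))

/-- the function `φ(x,t) = t^(1−β) + (1 + t^β)|x|²` is a strict supersolution:
for some `T₂ ∈ (0, 1]`, `T₂ ≤ T`, and with `γ₂ = min(β/2, (1−β)/2)`,
`-φ_t + M⁺(D²φ) + b·Dφ + cφ ≤ −γ₂ (t^(−β) + t^(β−1)|x|²)` on `Ω × (0,T₂]`. -/
theorem phi_supersolution {n : ℕ} (lam Lam : ℝ) (hlam : 0 < lam) (hLam : lam ≤ Lam)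
    (β : ℝ) (hβ : 0 < β) (hβ1 : β < 1)
    (Ω : Set (EuclideanSpace ℝ (Fin n))) (T : ℝ) (hT : 0 < T)
    (b₀ c₀ : ℝ → ℝ)
    (hb₀pos : ∀ t ∈ Ioo 0 T, 0 ≤ b₀ t) (hc₀pos : ∀ t ∈ Ioo 0 T, 0 ≤ c₀ t)
    (hb₀ : Filter.Tendsto (fun t => t * b₀ t ^ 2) (nhdsWithin 0 (Ioi 0)) (nhds 0))
    (hc₀ : Filter.Tendsto (fun t => t * c₀ t) (nhdsWithin 0 (Ioi 0)) (nhds 0))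
    (hc₀' : Filter.Tendsto (fun t => t ^ (β - 1) * c₀ t) (nhdsWithin 0 (Ioi 0)) (nhds 0))
    (b : EuclideanSpace ℝ (Fin n) → ℝ → EuclideanSpace ℝ (Fin n))
    (c : EuclideanSpace ℝ (Fin n) → ℝ → ℝ)
    (hb : ∀ x ∈ Ω, ∀ t ∈ Ioo 0 T, ‖b x t‖ ≤ b₀ t)
    (hc : ∀ x ∈ Ω, ∀ t ∈ Ioo 0 T, |c x t| ≤ c₀ t)
    (hcneg : ∀ x ∈ Ω, ∀ t ∈ Ioo 0 T, c x t ≤ 0)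
    (φ : EuclideanSpace ℝ (Fin n) → ℝ → ℝ)
    (hφ : ∀ x t, φ x t = t ^ (1 - β) + (1 + t ^ β) * ‖x‖ ^ 2) :
    ∃ T₂ : ℝ, 0 < T₂ ∧ T₂ ≤ 1 ∧ T₂ ≤ T ∧
      ∀ x ∈ Ω, ∀ t : ℝ, 0 < t → t ≤ T₂ →
        -(deriv (fun s => φ x s) t) + pucciPlus lam Lam (hess (fun y => φ y t) x)
            + (∑ i, b x t i * grad (fun y => φ y t) x i) + c x t * φ x t
          ≤ -(min (β / 2) ((1 - β) / 2)) * (t ^ (-β) + t ^ (β - 1) * ‖x‖ ^ 2) :=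
  phi_supersolution_general lam Lam hlam hLam β hβ hβ1 Ω T hT b₀ c₀ hb₀ hc₀ b c hb hc hcneg φ hφ
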